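/- arXiv:2603.28956 — 5 statements merged into one kernel-verified Lean document; each statement's English description precedes it below -/
import Mathlib

section
/- If a normed space is 2-uniformly convex with constant t > 0 (i.e. ‖(f+g)/2‖² + t‖(f-g)/2‖² ≤ (‖f‖² + ‖g‖²)/2 for all f, g), then it has cotype 2 with constant √t: for all m ≥ 1 and vectors f₁,…,f_m, t·∑‖fᵢ‖² ≤ E_ε‖∑εᵢfᵢ‖², where ε₁,…,ε_m are i.i.d. Rademacher random variables. -/
/-!
Uniform convexity at the pair `x ± g` says that averaging `‖x ± g‖²` over the sign gains at least
`‖x‖² + t‖g‖²`. Peeling off one Rademacher sign at a time, with the remaining partial sum playing the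
role of `x`, gives `‖x‖² + t ∑ ‖fᵢ‖² ≤ E_ε ‖x + ∑ εᵢ fᵢ‖²` by induction on the number of vectors;
the theorem is the case `x = 0`.
-/

open Finset

def IsTwoUniformlyConvex (E : Type*) [NormedAddCommGroup E] [NormedSpace ℝ E] (t : ℝ) : Prop :=
  ∀ f g : E, ‖(2⁻¹ : ℝ) • (f + g)‖ ^ 2 + t * ‖(2⁻¹ : ℝ) • (f - g)‖ ^ 2 ≤ (‖f‖ ^ 2 + ‖g‖ ^ 2) / 2

section

variable {E : Type*} [NormedAddCommGroup E] [NormedSpace ℝ E]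

theorem IsTwoUniformlyConvex.sq_norm_add_mul_sq_norm_le {t : ℝ} (hUC : IsTwoUniformlyConvex E t)
    (x g : E) : ‖x‖ ^ 2 + t * ‖g‖ ^ 2 ≤ (‖x + g‖ ^ 2 + ‖x - g‖ ^ 2) / 2 := by
  have h := hUC (x + g) (x - g)
  rwa [show (2⁻¹ : ℝ) • ((x + g) + (x - g)) = x by module,
    show (2⁻¹ : ℝ) • ((x + g) - (x - g)) = g by module] at h

theorem sum_pi_fin_succ_bool {M : Type*} [AddCommMonoid M] (m : ℕ)
    (F : (Fin (m + 1) → Bool) → M) :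
    ∑ ε, F ε = ∑ ε : Fin m → Bool, (F (Fin.cons true ε) + F (Fin.cons false ε)) := by
  rw [← Fintype.sum_equiv (Fin.consEquiv fun _ ↦ Bool) (fun p ↦ F (Fin.cons p.1 p.2)) F
    fun _ ↦ rfl, Fintype.sum_prod_type, Fintype.sum_bool, sum_add_distrib]

theorem sum_sign_cons_smul (m : ℕ) (f : Fin (m + 1) → E) (b : Bool) (ε : Fin m → Bool) :
    ∑ i, (if (Fin.cons b ε : Fin (m + 1) → Bool) i then (1 : ℝ) else -1) • f i
      = (if b then (1 : ℝ) else -1) • f 0 + ∑ i : Fin m, (if ε i then (1 : ℝ) else -1) • f i.succ := by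
  simp only [Fin.sum_univ_succ, Fin.cons_zero, Fin.cons_succ]

theorem IsTwoUniformlyConvex.sq_norm_add_le_rademacher_average {t : ℝ}
    (hUC : IsTwoUniformlyConvex E t) (m : ℕ) (f : Fin m → E) (x : E) :
    ‖x‖ ^ 2 + t * ∑ i, ‖f i‖ ^ 2
      ≤ (1 / 2 ^ m) * ∑ ε : Fin m → Bool, ‖x + ∑ i, (if ε i then (1 : ℝ) else -1) • f i‖ ^ 2 := by
  induction m generalizing x with
  | zero => simp
  | succ m ih =>
    set S : (Fin m → Bool) → E := fun ε ↦ ∑ i : Fin m, (if ε i then (1 : ℝ) else -1) • f i.succ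
    have hsplit : ∑ ε : Fin (m + 1) → Bool, ‖x + ∑ i, (if ε i then (1 : ℝ) else -1) • f i‖ ^ 2
        = ∑ ε, ‖(x + f 0) + S ε‖ ^ 2 + ∑ ε, ‖(x - f 0) + S ε‖ ^ 2 := by
      rw [sum_pi_fin_succ_bool, sum_add_distrib]
      simp only [sum_sign_cons_smul, if_true, Bool.false_eq_true, if_false, one_smul, neg_one_smul,
        ← add_assoc, ← sub_eq_add_neg, S]
    have hplus : ‖x + f 0‖ ^ 2 + t * ∑ i : Fin m, ‖f i.succ‖ ^ 2
        ≤ 1 / 2 ^ m * ∑ ε, ‖(x + f 0) + S ε‖ ^ 2 := ih (fun i ↦ f i.succ) (x + f 0)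
    have hminus : ‖x - f 0‖ ^ 2 + t * ∑ i : Fin m, ‖f i.succ‖ ^ 2
        ≤ 1 / 2 ^ m * ∑ ε, ‖(x - f 0) + S ε‖ ^ 2 := ih (fun i ↦ f i.succ) (x - f 0)
    have hx := hUC.sq_norm_add_mul_sq_norm_le x (f 0)
    have havg : ∀ A B : ℝ, 1 / 2 ^ (m + 1) * (A + B) = (1 / 2 ^ m * A + 1 / 2 ^ m * B) / 2 := by
      intro A B; rw [pow_succ]; ring
    rw [hsplit, havg, Fin.sum_univ_succ]
    linarith

end

theorem uc2_implies_cotype2_general {E : Type*} [NormedAddCommGroup E] [NormedSpace ℝ E]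
    (t : ℝ)
    (hUC : ∀ f g : E,
      ‖(2⁻¹ : ℝ) • (f + g)‖ ^ 2 + t * ‖(2⁻¹ : ℝ) • (f - g)‖ ^ 2
        ≤ (‖f‖ ^ 2 + ‖g‖ ^ 2) / 2) :
    ∀ m : ℕ, 1 ≤ m → ∀ f : Fin m → E,
      t * ∑ i, ‖f i‖ ^ 2
        ≤ (1 / 2 ^ m) *
            ∑ ε : Fin m → Bool, ‖∑ i, (if ε i then (1 : ℝ) else -1) • f i‖ ^ 2 := by
  intro m _ f
  simpa using IsTwoUniformlyConvex.sq_norm_add_le_rademacher_average hUC m f 0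

/-- 2-uniform convexity with constant `t > 0` implies cotype 2 with
constant `√t`: for all `m ≥ 1` and `f₁,…,f_m`,
`t·∑‖fᵢ‖² ≤ E_ε ‖∑ εᵢ fᵢ‖²` where the `εᵢ` are i.i.d. Rademacher signs. -/
theorem uc2_implies_cotype2 {E : Type*} [NormedAddCommGroup E] [NormedSpace ℝ E]
    (t : ℝ) (ht : 0 < t)
    (hUC : ∀ f g : E,
      ‖(2⁻¹ : ℝ) • (f + g)‖ ^ 2 + t * ‖(2⁻¹ : ℝ) • (f - g)‖ ^ 2
        ≤ (‖f‖ ^ 2 + ‖g‖ ^ 2) / 2) :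
    ∀ m : ℕ, 1 ≤ m → ∀ f : Fin m → E,
      t * ∑ i, ‖f i‖ ^ 2
        ≤ (1 / 2 ^ m) *
            ∑ ε : Fin m → Bool, ‖∑ i, (if ε i then (1 : ℝ) else -1) • f i‖ ^ 2 :=
  uc2_implies_cotype2_general t hUC
end

section
/- For p ∈ (1, 2], the space ℓ_p^d (ℝ^d with the ℓ_p norm) is 2-uniformly convex with constant p - 1: for all x, y ∈ ℝ^d, ‖(x+y)/2‖_p² + (p-1)‖(x-y)/2‖_p² ≤ (‖x‖_p² + ‖y‖_p²)/2. -/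
/-!
Write `u = (x + y) / 2` and `v = (x - y) / 2`, so that `x = u + v` and `y = u - v`. Raising the
claim to the power `p / 2 ≤ 1`, it follows from the chain
`(‖u‖² + (p-1)‖v‖²)^(p/2) ≤ ∑ᵢ (uᵢ² + (p-1)vᵢ²)^(p/2) ≤ ∑ᵢ (|xᵢ|^p + |yᵢ|^p)/2
  = (‖x‖^p + ‖y‖^p)/2 ≤ ((‖x‖² + ‖y‖²)/2)^(p/2)`.
The first step is the reverse Minkowski inequality for the exponent `p / 2 ≤ 1`, the last one the
concavity of `t ↦ t^(p/2)`, and the middle one is the scalar case `d = 1`. After scaling, the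
scalar case reads `(1 + (p-1)t²)^(p/2) ≤ ((1+t)^p + (1-t)^p)/2` for `|t| ≤ 1`. Bernoulli bounds
the left side by `1 + p(p-1)t²/2`; this lies below the right side since both sides agree to first
order at `t = 0` and, differentiating twice, the comparison reduces to
`(1+s)^(p-2) + (1-s)^(p-2) ≥ 2`, which holds because `(1+s)(1-s) ≤ 1` and `p - 2 ≤ 0`.
-/

open Real Set Finset

lemma sq_rpow_div_two {t : ℝ} (ht : 0 ≤ t) (p : ℝ) : (t ^ 2) ^ (p / 2) = t ^ p := by
  rw [← rpow_two, ← rpow_mul ht]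
  ring_nf

lemma two_le_add_of_one_le_mul {x y : ℝ} (hx : 0 ≤ x) (hy : 0 ≤ y) (hxy : 1 ≤ x * y) :
    2 ≤ x + y := by
  nlinarith [sq_nonneg (x - y)]

lemma hasDerivAt_one_add_rpow {q s : ℝ} (hs : 0 < 1 + s) :
    HasDerivAt (fun t : ℝ => (1 + t) ^ q) (q * (1 + s) ^ (q - 1)) s := by
  simpa using ((hasDerivAt_id s).const_add 1).rpow_const (p := q) (Or.inl hs.ne')

lemma hasDerivAt_one_sub_rpow {q s : ℝ} (hs : 0 < 1 - s) :
    HasDerivAt (fun t : ℝ => (1 - t) ^ q) (-(q * (1 - s) ^ (q - 1))) s := by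
  simpa using ((hasDerivAt_id s).const_sub 1).rpow_const (p := q) (Or.inl hs.ne')

lemma two_le_one_add_rpow_add_one_sub_rpow {r s : ℝ} (hr : r ≤ 0) (hs : |s| < 1) :
    2 ≤ (1 + s) ^ r + (1 - s) ^ r := by
  obtain ⟨hs₁, hs₂⟩ := abs_lt.1 hs
  refine two_le_add_of_one_le_mul (rpow_nonneg (by linarith) r) (rpow_nonneg (by linarith) r) ?_
  rw [← mul_rpow (by linarith) (by linarith)]
  exact one_le_rpow_of_pos_of_le_one_of_nonpos (by nlinarith) (by nlinarith [sq_nonneg s]) hr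

lemma two_mul_mul_le_one_add_rpow_sub_one_sub_rpow {q t : ℝ} (hq₀ : 0 ≤ q) (hq₁ : q ≤ 1)
    (ht₀ : 0 ≤ t) (ht₁ : t ≤ 1) : 2 * q * t ≤ (1 + t) ^ q - (1 - t) ^ q := by
  have hmono : MonotoneOn (fun t : ℝ => (1 + t) ^ q - (1 - t) ^ q - 2 * q * t) (Icc 0 1) := by
    refine monotoneOn_of_hasDerivWithinAt_nonneg (convex_Icc 0 1)
      (f' := fun s => q * ((1 + s) ^ (q - 1) + (1 - s) ^ (q - 1) - 2))
      (Continuous.continuousOn (by fun_prop (disch := exact hq₀))) ?_ ?_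
    all_goals
      rw [interior_Icc]
      rintro s ⟨hs₀, hs₁⟩
    · exact ((((hasDerivAt_one_add_rpow (by linarith)).sub
        (hasDerivAt_one_sub_rpow (by linarith))).sub
        ((hasDerivAt_id s).const_mul (2 * q))).congr_deriv (by ring)).hasDerivWithinAt
    · exact mul_nonneg hq₀ (sub_nonneg.2 (two_le_one_add_rpow_add_one_sub_rpow
        (by linarith) (abs_lt.2 ⟨by linarith, hs₁⟩)))
  simpa using hmono ⟨le_rfl, zero_le_one⟩ ⟨ht₀, ht₁⟩ ht₀

lemma one_add_mul_sq_le_one_add_rpow_add_one_sub_rpow_of_nonneg {p t : ℝ} (hp₁ : 1 ≤ p)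
    (hp₂ : p ≤ 2) (ht₀ : 0 ≤ t) (ht₁ : t ≤ 1) :
    1 + p * (p - 1) / 2 * t ^ 2 ≤ ((1 + t) ^ p + (1 - t) ^ p) / 2 := by
  have hmono : MonotoneOn
      (fun t : ℝ => ((1 + t) ^ p + (1 - t) ^ p) / 2 - p * (p - 1) / 2 * t ^ 2) (Icc 0 1) := by
    refine monotoneOn_of_hasDerivWithinAt_nonneg (convex_Icc 0 1)
      (f' := fun s => p / 2 * ((1 + s) ^ (p - 1) - (1 - s) ^ (p - 1) - 2 * (p - 1) * s))
      (Continuous.continuousOn (by fun_prop (disch := linarith))) ?_ ?_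
    all_goals
      rw [interior_Icc]
      rintro s ⟨hs₀, hs₁⟩
    · exact (((((hasDerivAt_one_add_rpow (by linarith)).add
        (hasDerivAt_one_sub_rpow (by linarith))).div_const 2).sub
        ((hasDerivAt_pow 2 s).const_mul (p * (p - 1) / 2))).congr_deriv
        (by simp only [Nat.cast_ofNat, Nat.add_one_sub_one, pow_one]; ring)).hasDerivWithinAt
    · exact mul_nonneg (by linarith) (sub_nonneg.2
        (two_mul_mul_le_one_add_rpow_sub_one_sub_rpow (by linarith) (by linarith)
          hs₀.le hs₁.le))
  have := hmono ⟨le_rfl, zero_le_one⟩ ⟨ht₀, ht₁⟩ ht₀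
  norm_num at this
  linarith

lemma one_add_mul_sq_le_one_add_rpow_add_one_sub_rpow {p t : ℝ} (hp₁ : 1 ≤ p) (hp₂ : p ≤ 2)
    (ht : |t| ≤ 1) : 1 + p * (p - 1) / 2 * t ^ 2 ≤ ((1 + t) ^ p + (1 - t) ^ p) / 2 := by
  rcases le_total 0 t with ht₀ | ht₀
  · exact one_add_mul_sq_le_one_add_rpow_add_one_sub_rpow_of_nonneg hp₁ hp₂ ht₀
      (abs_le.1 ht).2
  · have := one_add_mul_sq_le_one_add_rpow_add_one_sub_rpow_of_nonneg hp₁ hp₂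
      (neg_nonneg.2 ht₀) (by linarith [(abs_le.1 ht).1])
    rwa [neg_sq, ← sub_eq_add_neg, sub_neg_eq_add, add_comm ((1 - t) ^ p)] at this

lemma one_add_mul_sq_rpow_le {p t : ℝ} (hp₁ : 1 ≤ p) (hp₂ : p ≤ 2) (ht : |t| ≤ 1) :
    (1 + (p - 1) * t ^ 2) ^ (p / 2) ≤ ((1 + t) ^ p + (1 - t) ^ p) / 2 :=
  calc (1 + (p - 1) * t ^ 2) ^ (p / 2) ≤ 1 + p / 2 * ((p - 1) * t ^ 2) :=
        rpow_one_add_le_one_add_mul_self (by nlinarith [sq_nonneg t]) (by linarith)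
          (by linarith)
    _ = 1 + p * (p - 1) / 2 * t ^ 2 := by ring
    _ ≤ ((1 + t) ^ p + (1 - t) ^ p) / 2 :=
        one_add_mul_sq_le_one_add_rpow_add_one_sub_rpow hp₁ hp₂ ht

lemma sq_add_mul_sq_rpow_le_of_abs_le {p a b : ℝ} (hp₁ : 1 ≤ p) (hp₂ : p ≤ 2)
    (hba : |b| ≤ |a|) : (a ^ 2 + (p - 1) * b ^ 2) ^ (p / 2) ≤ (|a + b| ^ p + |a - b| ^ p) / 2 := by
  rcases eq_or_ne a 0 with rfl | ha
  · obtain rfl : b = 0 := abs_nonpos_iff.1 (by simpa using hba)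
    simp [zero_rpow (by linarith : p / 2 ≠ 0), zero_rpow (by linarith : p ≠ 0)]
  set t := b / a
  have ht : |t| ≤ 1 := by rw [abs_div]; exact div_le_one_of_le₀ hba (abs_nonneg a)
  have hb : b = a * t := (mul_div_cancel₀ b ha).symm
  have habs (s : ℝ) (hs : |s| ≤ 1) : (|a * (1 + s)|) ^ p = |a| ^ p * (1 + s) ^ p := by
    have : 0 ≤ 1 + s := by linarith [neg_abs_le s]
    rw [abs_mul, abs_of_nonneg this, mul_rpow (abs_nonneg a) this]
  calc (a ^ 2 + (p - 1) * b ^ 2) ^ (p / 2) = |a| ^ p * (1 + (p - 1) * t ^ 2) ^ (p / 2) := by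
        rw [hb, show a ^ 2 + (p - 1) * (a * t) ^ 2 = |a| ^ 2 * (1 + (p - 1) * t ^ 2) by
          rw [sq_abs]; ring, mul_rpow (sq_nonneg _) (by nlinarith [sq_nonneg t]),
          sq_rpow_div_two (abs_nonneg a)]
    _ ≤ |a| ^ p * (((1 + t) ^ p + (1 - t) ^ p) / 2) :=
        mul_le_mul_of_nonneg_left (one_add_mul_sq_rpow_le hp₁ hp₂ ht) (by positivity)
    _ = (|a + b| ^ p + |a - b| ^ p) / 2 := by
        rw [hb, show a + a * t = a * (1 + t) by ring, show a - a * t = a * (1 + -t) by ring,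
          habs t ht, habs (-t) (by rwa [abs_neg])]
        ring_nf

lemma sq_add_mul_sq_rpow_le {p : ℝ} (hp₁ : 1 ≤ p) (hp₂ : p ≤ 2) (a b : ℝ) :
    (a ^ 2 + (p - 1) * b ^ 2) ^ (p / 2) ≤ (|a + b| ^ p + |a - b| ^ p) / 2 := by
  rcases le_total |b| |a| with hba | hab
  · exact sq_add_mul_sq_rpow_le_of_abs_le hp₁ hp₂ hba
  · calc (a ^ 2 + (p - 1) * b ^ 2) ^ (p / 2) ≤ (b ^ 2 + (p - 1) * a ^ 2) ^ (p / 2) := by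
          have : a ^ 2 ≤ b ^ 2 := sq_le_sq.2 hab
          exact rpow_le_rpow (by nlinarith [sq_nonneg b]) (by nlinarith) (by linarith)
      _ ≤ (|b + a| ^ p + |b - a| ^ p) / 2 := sq_add_mul_sq_rpow_le_of_abs_le hp₁ hp₂ hab
      _ = (|a + b| ^ p + |a - b| ^ p) / 2 := by rw [add_comm b, abs_sub_comm]

lemma rpow_add_rpow_div_two_le {p A B : ℝ} (hp₀ : 0 ≤ p) (hp₂ : p ≤ 2) (hA : 0 ≤ A)
    (hB : 0 ≤ B) : (A ^ p + B ^ p) / 2 ≤ ((A ^ 2 + B ^ 2) / 2) ^ (p / 2) := by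
  have := (concaveOn_rpow (p := p / 2) (by linarith) (by linarith)).2
    (sq_nonneg A) (sq_nonneg B) (by norm_num : (0 : ℝ) ≤ 1 / 2) (by norm_num : (0 : ℝ) ≤ 1 / 2)
    (by norm_num)
  simp only [smul_eq_mul, sq_rpow_div_two hA, sq_rpow_div_two hB] at this
  calc (A ^ p + B ^ p) / 2 = 1 / 2 * A ^ p + 1 / 2 * B ^ p := by ring
    _ ≤ (1 / 2 * A ^ 2 + 1 / 2 * B ^ 2) ^ (p / 2) := this
    _ = ((A ^ 2 + B ^ 2) / 2) ^ (p / 2) := by ring_nf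

lemma rpow_add_rpow_rpow_inv_add_le {q : ℝ} (hq : 1 ≤ q) {a b a' b' : ℝ} (ha : 0 ≤ a)
    (hb : 0 ≤ b) (ha' : 0 ≤ a') (hb' : 0 ≤ b') :
    ((a + a') ^ q + (b + b') ^ q) ^ (1 / q) ≤
      (a ^ q + b ^ q) ^ (1 / q) + (a' ^ q + b' ^ q) ^ (1 / q) := by
  simpa [Fin.sum_univ_two] using Real.Lp_add_le_of_nonneg (s := univ) (f := ![a, b])
    (g := ![a', b']) hq (by simp [Fin.forall_fin_two, ha, hb])
    (by simp [Fin.forall_fin_two, ha', hb'])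

lemma rpow_sum_add_rpow_sum_rpow_inv_le {ι : Type*} (s : Finset ι) {q : ℝ} (hq : 1 ≤ q)
    {a b : ι → ℝ} (ha : ∀ i, 0 ≤ a i) (hb : ∀ i, 0 ≤ b i) :
    ((∑ i ∈ s, a i) ^ q + (∑ i ∈ s, b i) ^ q) ^ (1 / q) ≤
      ∑ i ∈ s, (a i ^ q + b i ^ q) ^ (1 / q) := by
  classical
  induction s using Finset.induction_on with
  | empty =>
    simp [zero_rpow (by linarith : q ≠ 0), zero_rpow (inv_ne_zero (by linarith : q ≠ 0))]
  | insert j s hj ih =>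
    rw [sum_insert hj, sum_insert hj, sum_insert hj]
    exact (rpow_add_rpow_rpow_inv_add_le hq (ha j) (hb j) (sum_nonneg fun i _ => ha i)
      (sum_nonneg fun i _ => hb i)).trans (add_le_add le_rfl ih)

lemma rpow_sum_rpow_inv_add_rpow_sum_rpow_inv_rpow_le {ι : Type*} (s : Finset ι) {r : ℝ}
    (hr₀ : 0 < r) (hr₁ : r ≤ 1) {a b : ι → ℝ} (ha : ∀ i, 0 ≤ a i) (hb : ∀ i, 0 ≤ b i) :
    ((∑ i ∈ s, a i ^ r) ^ r⁻¹ + (∑ i ∈ s, b i ^ r) ^ r⁻¹) ^ r ≤ ∑ i ∈ s, (a i + b i) ^ r := by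
  have := rpow_sum_add_rpow_sum_rpow_inv_le s (q := r⁻¹) (one_le_inv₀ hr₀ |>.2 hr₁)
    (a := fun i => a i ^ r) (b := fun i => b i ^ r) (fun i => rpow_nonneg (ha i) r)
    (fun i => rpow_nonneg (hb i) r)
  simpa [rpow_rpow_inv (ha _) hr₀.ne', rpow_rpow_inv (hb _) hr₀.ne'] using this

namespace PiLp

lemma norm_nonneg' {p : ENNReal} {ι : Type*} [Fintype ι] {β : ι → Type*}
    [∀ i, SeminormedAddCommGroup (β i)] (f : PiLp p β) : 0 ≤ ‖f‖ := by
  rcases p.trichotomy with rfl | rfl | hp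
  · rw [norm_eq_card]
    positivity
  · rw [norm_eq_ciSup]
    exact Real.iSup_nonneg fun i => norm_nonneg _
  · rw [norm_eq_sum hp]
    positivity

variable {ι : Type*} [Fintype ι] {p : ℝ}

lemma norm_rpow_eq_sum_abs_rpow (hp : 0 < p) (z : PiLp (ENNReal.ofReal p) (fun _ : ι => ℝ)) :
    ‖z‖ ^ p = ∑ i, |z i| ^ p := by
  rw [norm_eq_sum (by rwa [ENNReal.toReal_ofReal hp.le]), ENNReal.toReal_ofReal hp.le,
    ← rpow_mul (sum_nonneg fun i _ => by positivity), one_div_mul_cancel hp.ne', rpow_one]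
  rfl

lemma sq_norm_add_mul_sq_norm_rpow_le (hp₀ : 0 < p) (hp₂ : p ≤ 2) {c : ℝ} (hc : 0 ≤ c)
    (u v : PiLp (ENNReal.ofReal p) (fun _ : ι => ℝ)) :
    (‖u‖ ^ 2 + c * ‖v‖ ^ 2) ^ (p / 2) ≤ ∑ i, (u i ^ 2 + c * v i ^ 2) ^ (p / 2) := by
  have hsum (z : PiLp (ENNReal.ofReal p) (fun _ : ι => ℝ)) :
      ∑ i, (z i ^ 2) ^ (p / 2) = (‖z‖ ^ 2) ^ (p / 2) := by
    simp only [← sq_abs (z _), sq_rpow_div_two (abs_nonneg _),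
      sq_rpow_div_two (norm_nonneg' z), norm_rpow_eq_sum_abs_rpow hp₀]
  have := rpow_sum_rpow_inv_add_rpow_sum_rpow_inv_rpow_le univ (r := p / 2) (by positivity)
    (by linarith) (a := fun i => u i ^ 2) (b := fun i => c * v i ^ 2) (fun i => by positivity)
    (fun i => by positivity)
  simp only [mul_rpow hc (sq_nonneg _), ← mul_sum, hsum] at this
  rwa [← mul_rpow hc (by positivity), rpow_rpow_inv (sq_nonneg _) (by positivity),
    rpow_rpow_inv (by positivity) (by positivity)] at this

end PiLp

theorem lp_two_uniform_convexity_general (d : ℕ) (p : ℝ)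
    (hp : 1 < p) (hp2 : p ≤ 2)
    (x y : PiLp (ENNReal.ofReal p) (fun _ : Fin d => ℝ)) :
    ‖(2⁻¹ : ℝ) • (x + y)‖ ^ 2 + (p - 1) * ‖(2⁻¹ : ℝ) • (x - y)‖ ^ 2
      ≤ (‖x‖ ^ 2 + ‖y‖ ^ 2) / 2 := by
  have hp₀ : 0 < p := by linarith
  set u := (2⁻¹ : ℝ) • (x + y)
  set v := (2⁻¹ : ℝ) • (x - y)
  have hx (i : Fin d) : u i + v i = x i := by
    simp only [smul_add, PiLp.add_apply, PiLp.sub_apply, PiLp.smul_apply, smul_eq_mul, u, v]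
    ring
  have hy (i : Fin d) : u i - v i = y i := by
    simp only [smul_add, PiLp.add_apply, PiLp.sub_apply, PiLp.smul_apply, smul_eq_mul, u, v]
    ring
  have hx₀ := PiLp.norm_nonneg' x
  have hy₀ := PiLp.norm_nonneg' y
  rw [← rpow_le_rpow_iff (z := p / 2) (by nlinarith [PiLp.norm_nonneg' u, PiLp.norm_nonneg' v])
    (by positivity) (by positivity)]
  calc (‖u‖ ^ 2 + (p - 1) * ‖v‖ ^ 2) ^ (p / 2)
      ≤ ∑ i, (u i ^ 2 + (p - 1) * v i ^ 2) ^ (p / 2) :=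
        PiLp.sq_norm_add_mul_sq_norm_rpow_le hp₀ hp2 (by linarith) u v
    _ ≤ ∑ i, (|x i| ^ p + |y i| ^ p) / 2 := sum_le_sum fun i _ => by
        simpa only [hx, hy] using sq_add_mul_sq_rpow_le hp.le hp2 (u i) (v i)
    _ = (‖x‖ ^ p + ‖y‖ ^ p) / 2 := by
        rw [PiLp.norm_rpow_eq_sum_abs_rpow hp₀, PiLp.norm_rpow_eq_sum_abs_rpow hp₀,
          ← sum_add_distrib, sum_div]
    _ ≤ ((‖x‖ ^ 2 + ‖y‖ ^ 2) / 2) ^ (p / 2) := rpow_add_rpow_div_two_le hp₀.le hp2 hx₀ hy₀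

/-- for `p ∈ (1,2]`, the space `ℓ_p^d` is 2-uniformly convex with
constant `p - 1` (Ball–Carlen–Lieb):
`‖(x+y)/2‖_p² + (p-1)‖(x-y)/2‖_p² ≤ (‖x‖_p² + ‖y‖_p²)/2`. -/
theorem lp_two_uniform_convexity (d : ℕ) (p : ℝ)
    [Fact (1 ≤ ENNReal.ofReal p)] (hp : 1 < p) (hp2 : p ≤ 2)
    (x y : PiLp (ENNReal.ofReal p) (fun _ : Fin d => ℝ)) :
    ‖(2⁻¹ : ℝ) • (x + y)‖ ^ 2 + (p - 1) * ‖(2⁻¹ : ℝ) • (x - y)‖ ^ 2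
      ≤ (‖x‖ ^ 2 + ‖y‖ ^ 2) / 2 :=
  lp_two_uniform_convexity_general d p hp hp2 x y
end

section
/- Let c > 0 and D > 0, and let K' ⊂ ℝ^d be a convex body with ‖w‖₂ ≤ D‖w‖_{K'} for all w. Let P, P' be n × d real matrices such that c·B₂^n ⊆ P'K' and c·B₂^n ⊆ PK'. Then for every ξ ∈ ℝ^n: ‖ξ‖_{P'K'} ≤ ‖ξ‖_{PK'}·(1 + (D/c)‖P - P'‖_F), where ‖·‖_{PK'} denotes the Minkowski gauge of PK' and ‖·‖_F the Frobenius norm. Consequently |‖ξ‖_{PK'} - ‖ξ‖_{P'K'}| ≤ (D/c)‖P - P'‖_F · max{‖ξ‖_{PK'}, ‖ξ‖_{P'K'}}. -/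
open Metric Pointwise

/-- Frobenius distance between two linear maps on Euclidean spaces, computed as
the square root of the sum of squared Euclidean norms of the column
differences. -/
noncomputable def frobDist {n d : ℕ}
    (T T' : EuclideanSpace ℝ (Fin d) →ₗ[ℝ] EuclideanSpace ℝ (Fin n)) : ℝ :=
  Real.sqrt (∑ j : Fin d,
    ‖T (EuclideanSpace.single j (1 : ℝ)) - T' (EuclideanSpace.single j (1 : ℝ))‖ ^ 2)

lemma frobDist_nonneg {n d : ℕ}
    (T T' : EuclideanSpace ℝ (Fin d) →ₗ[ℝ] EuclideanSpace ℝ (Fin n)) :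
    0 ≤ frobDist T T' := Real.sqrt_nonneg _

lemma frobDist_comm {n d : ℕ}
    (T T' : EuclideanSpace ℝ (Fin d) →ₗ[ℝ] EuclideanSpace ℝ (Fin n)) :
    frobDist T T' = frobDist T' T := by
  unfold frobDist
  congr 1
  refine Finset.sum_congr rfl fun j _ => ?_
  rw [norm_sub_rev]

lemma norm_sub_apply_le_frobDist {n d : ℕ}
    (T T' : EuclideanSpace ℝ (Fin d) →ₗ[ℝ] EuclideanSpace ℝ (Fin n))
    (w : EuclideanSpace ℝ (Fin d)) :
    ‖T w - T' w‖ ≤ frobDist T T' * ‖w‖ := by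
  set v : Fin d → EuclideanSpace ℝ (Fin n) := fun j =>
    T (EuclideanSpace.single j (1 : ℝ)) - T' (EuclideanSpace.single j (1 : ℝ)) with hv
  have hw : w = ∑ j : Fin d, w j • EuclideanSpace.single j (1 : ℝ) := by
    have := (EuclideanSpace.basisFun (Fin d) ℝ).sum_repr w
    simp only [EuclideanSpace.basisFun_repr, EuclideanSpace.basisFun_apply] at this
    exact this.symm
  have hTw : T w - T' w = ∑ j : Fin d, w j • v j := by
    conv_lhs => rw [hw]
    rw [map_sum, map_sum, ← Finset.sum_sub_distrib]
    refine Finset.sum_congr rfl fun j _ => ?_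
    simp [hv, smul_sub]
  have h1 : ‖T w - T' w‖ ≤ ∑ j : Fin d, |w j| * ‖v j‖ := by
    rw [hTw]
    refine (norm_sum_le _ _).trans_eq ?_
    refine Finset.sum_congr rfl fun j _ => ?_
    rw [norm_smul, Real.norm_eq_abs]
  refine h1.trans ?_
  have hCS : (∑ j : Fin d, |w j| * ‖v j‖) ^ 2 ≤
      (∑ j : Fin d, ‖v j‖ ^ 2) * ∑ j : Fin d, |w j| ^ 2 := by
    have := Finset.sum_mul_sq_le_sq_mul_sq Finset.univ (fun j : Fin d => |w j|)
      (fun j => ‖v j‖)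
    linarith [this]
  have hnormw : ‖w‖ = Real.sqrt (∑ j : Fin d, |w j| ^ 2) := by
    rw [EuclideanSpace.norm_eq]
    simp [Real.norm_eq_abs]
  have hfw : frobDist T T' * ‖w‖ =
      Real.sqrt ((∑ j : Fin d, ‖v j‖ ^ 2) * ∑ j : Fin d, |w j| ^ 2) := by
    rw [Real.sqrt_mul (by positivity), frobDist, hnormw]
  rw [hfw]
  rw [Real.le_sqrt (by positivity) (by positivity)]
  exact hCS

/-- One-sided perturbation bound. -/
lemma gauge_pert_one_sided {n d : ℕ}
    (T T' : EuclideanSpace ℝ (Fin d) →ₗ[ℝ] EuclideanSpace ℝ (Fin n))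
    (K' : Set (EuclideanSpace ℝ (Fin d)))
    (hconv : Convex ℝ K')
    (c D : ℝ) (hc : 0 < c) (hD : 0 < D)
    (hball : closedBall (0 : EuclideanSpace ℝ (Fin n)) c ⊆ T '' K')
    (hball' : closedBall (0 : EuclideanSpace ℝ (Fin n)) c ⊆ T' '' K')
    (hDbound : ∀ w : EuclideanSpace ℝ (Fin d), ‖w‖ ≤ D * gauge K' w)
    (ξ : EuclideanSpace ℝ (Fin n)) :
    gauge (T' '' K') ξ ≤ gauge (T '' K') ξ * (1 + (D / c) * frobDist T T') := by
  have habsT : Absorbent ℝ (T '' K') :=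
    absorbent_nhds_zero (Filter.mem_of_superset (closedBall_mem_nhds 0 hc) hball)
  have habsT' : Absorbent ℝ (T' '' K') :=
    absorbent_nhds_zero (Filter.mem_of_superset (closedBall_mem_nhds 0 hc) hball')
  have hconvT' : Convex ℝ (T' '' K') := hconv.linear_image T'
  have hF : 0 ≤ frobDist T T' := frobDist_nonneg T T'
  set F := frobDist T T' with hFdef
  set M := 1 + (D / c) * F with hM
  have hx0 : 0 ≤ D / c * F := mul_nonneg (div_nonneg hD.le hc.le) hF
  have hM1 : (1 : ℝ) ≤ M := by rw [hM]; linarith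
  have hM0 : 0 < M := lt_of_lt_of_le one_pos hM1
  -- gauge of T' '' K' is bounded by norm / c
  have hgauge_norm : ∀ z : EuclideanSpace ℝ (Fin n), gauge (T' '' K') z ≤ ‖z‖ / c := by
    intro z
    have := gauge_mono (absorbent_nhds_zero (closedBall_mem_nhds 0 hc)) hball' z
    rwa [gauge_closedBall hc.le] at this
  -- key claim: for every b with gauge (T '' K') ξ < b... via density
  have key : ∀ b : ℝ, 0 < b → ξ ∈ b • (T '' K') → gauge (T' '' K') ξ ≤ b * M := by
    intro b hb hmem
    obtain ⟨y, hy, hyx⟩ := hmem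
    obtain ⟨u, hu, rfl⟩ := hy
    set w : EuclideanSpace ℝ (Fin d) := b • u with hwdef
    have hTw : T w = ξ := by rw [hwdef, map_smul]; exact hyx
    have hgw : gauge K' w ≤ b := gauge_le_of_mem hb.le (Set.smul_mem_smul_set hu)
    have hsplit : ξ = T' w + (T w - T' w) := by rw [hTw]; abel
    have h1 : gauge (T' '' K') (T' w) ≤ b := by
      refine gauge_le_of_mem hb.le ?_
      rw [hwdef, map_smul]
      exact Set.smul_mem_smul_set ⟨u, hu, rfl⟩
    have h2 : gauge (T' '' K') (T w - T' w) ≤ (D / c) * F * b := by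
      refine (hgauge_norm _).trans ?_
      have hn : ‖T w - T' w‖ ≤ F * ‖w‖ := norm_sub_apply_le_frobDist T T' w
      have hw2 : ‖w‖ ≤ D * b := by
        refine (hDbound w).trans ?_
        exact mul_le_mul_of_nonneg_left hgw hD.le
      have : ‖T w - T' w‖ ≤ F * (D * b) :=
        hn.trans (mul_le_mul_of_nonneg_left hw2 hF)
      calc ‖T w - T' w‖ / c ≤ F * (D * b) / c := by gcongr
        _ = (D / c) * F * b := by field_simp
    calc gauge (T' '' K') ξ = gauge (T' '' K') (T' w + (T w - T' w)) := by rw [← hsplit]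
      _ ≤ gauge (T' '' K') (T' w) + gauge (T' '' K') (T w - T' w) :=
          gauge_add_le hconvT' habsT' _ _
      _ ≤ b + (D / c) * F * b := add_le_add h1 h2
      _ = b * M := by rw [hM]; ring
  -- conclude by density
  refine le_of_forall_gt_imp_ge_of_dense fun a ha => ?_
  have hga : gauge (T '' K') ξ < a / M := by
    rw [lt_div_iff₀ hM0]
    exact ha
  obtain ⟨b, hb0, hba, hmem⟩ := exists_lt_of_gauge_lt habsT hga
  calc gauge (T' '' K') ξ ≤ b * M := key b hb0 hmem
    _ ≤ (a / M) * M := mul_le_mul_of_nonneg_right hba.le hM0.le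
    _ = a := by field_simp

/-- gauge perturbation under change of the projection matrix.
If `c·B₂^n ⊆ PK'` and `c·B₂^n ⊆ P'K'`, and `‖w‖₂ ≤ D‖w‖_{K'}` for all `w`,
then for every `ξ`:
`‖ξ‖_{P'K'} ≤ ‖ξ‖_{PK'}(1 + (D/c)‖P-P'‖_F)`, and consequently
`|‖ξ‖_{PK'} - ‖ξ‖_{P'K'}| ≤ (D/c)‖P-P'‖_F · max{‖ξ‖_{PK'}, ‖ξ‖_{P'K'}}`. -/
theorem gauge_projection_perturbation (n d : ℕ)
    (T T' : EuclideanSpace ℝ (Fin d) →ₗ[ℝ] EuclideanSpace ℝ (Fin n))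
    (K' : Set (EuclideanSpace ℝ (Fin d)))
    (hconv : Convex ℝ K') (h0 : (0 : EuclideanSpace ℝ (Fin d)) ∈ K')
    (c D : ℝ) (hc : 0 < c) (hD : 0 < D)
    (hball : closedBall (0 : EuclideanSpace ℝ (Fin n)) c ⊆ T '' K')
    (hball' : closedBall (0 : EuclideanSpace ℝ (Fin n)) c ⊆ T' '' K')
    (hDbound : ∀ w : EuclideanSpace ℝ (Fin d), ‖w‖ ≤ D * gauge K' w) :
    ∀ ξ : EuclideanSpace ℝ (Fin n),
      gauge (T' '' K') ξ ≤ gauge (T '' K') ξ * (1 + (D / c) * frobDist T T') ∧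
      |gauge (T '' K') ξ - gauge (T' '' K') ξ|
        ≤ (D / c) * frobDist T T' *
            max (gauge (T '' K') ξ) (gauge (T' '' K') ξ) := by
  intro ξ
  have h1 := gauge_pert_one_sided T T' K' hconv c D hc hD hball hball' hDbound ξ
  have h2 := gauge_pert_one_sided T' T K' hconv c D hc hD hball' hball hDbound ξ
  rw [frobDist_comm T' T] at h2
  refine ⟨h1, ?_⟩
  set g := gauge (T '' K') ξ
  set g' := gauge (T' '' K') ξ
  have hg : 0 ≤ g := gauge_nonneg _
  have hg' : 0 ≤ g' := gauge_nonneg _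
  set m := (D / c) * frobDist T T' with hm
  have hm0 : 0 ≤ m := by
    have := frobDist_nonneg T T'
    positivity
  rw [abs_sub_le_iff]
  constructor
  · have : g ≤ g' + g' * m := by nlinarith [h2]
    have hmax : g' ≤ max g g' := le_max_right _ _
    nlinarith [mul_le_mul_of_nonneg_left hmax hm0]
  · have : g' ≤ g + g * m := by nlinarith [h1]
    have hmax : g ≤ max g g' := le_max_left _ _
    nlinarith [mul_le_mul_of_nonneg_left hmax hm0]
end

section
/- Let (B, ‖·‖₁) and (B, ‖·‖₂) be two norms on the same vector space, each 2-uniformly convex with constant t > 0. Then the 2-Firey sum norm ‖f‖ := inf{ (‖g‖₁² + ‖h‖₂²)^{1/2} : f = g + h } is a norm on B that is 2-uniformly convex with constant t (up to the same constant): ‖(f+f')/2‖² + t‖(f-f')/2‖² ≤ (‖f‖² + ‖f'‖²)/2 for all f, f'. -/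
/-- The 2-Firey sum of two norms `N₁, N₂` on the same vector space:
`‖f‖ = inf { √(N₁(g)² + N₂(h)²) : f = g + h }`. -/
noncomputable def fireySum {B : Type*} [AddCommGroup B] (N₁ N₂ : B → ℝ) (f : B) : ℝ :=
  sInf {r : ℝ | ∃ g h : B, f = g + h ∧ r = Real.sqrt (N₁ g ^ 2 + N₂ h ^ 2)}

/-- if `N₁` and `N₂` are norms on `B`, each 2-uniformly convex
with constant `t > 0`, then their 2-Firey sum is 2-uniformly convex with
constant `t`:
`‖(f+f')/2‖² + t‖(f-f')/2‖² ≤ (‖f‖² + ‖f'‖²)/2` for all `f, f'`. -/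
theorem fireySum_uniform_convex {B : Type*} [AddCommGroup B] [Module ℝ B]
    (N₁ N₂ : B → ℝ) (t : ℝ) (ht : 0 < t)
    (h₁nonneg : ∀ x, 0 ≤ N₁ x) (h₂nonneg : ∀ x, 0 ≤ N₂ x)
    (h₁def : ∀ x, N₁ x = 0 → x = 0) (h₂def : ∀ x, N₂ x = 0 → x = 0)
    (h₁hom : ∀ (a : ℝ) (x), N₁ (a • x) = |a| * N₁ x)
    (h₂hom : ∀ (a : ℝ) (x), N₂ (a • x) = |a| * N₂ x)
    (h₁tri : ∀ x y, N₁ (x + y) ≤ N₁ x + N₁ y)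
    (h₂tri : ∀ x y, N₂ (x + y) ≤ N₂ x + N₂ y)
    (hUC₁ : ∀ f g : B,
      N₁ ((2⁻¹ : ℝ) • (f + g)) ^ 2 + t * N₁ ((2⁻¹ : ℝ) • (f - g)) ^ 2
        ≤ (N₁ f ^ 2 + N₁ g ^ 2) / 2)
    (hUC₂ : ∀ f g : B,
      N₂ ((2⁻¹ : ℝ) • (f + g)) ^ 2 + t * N₂ ((2⁻¹ : ℝ) • (f - g)) ^ 2
        ≤ (N₂ f ^ 2 + N₂ g ^ 2) / 2) :
    ∀ f f' : B,
      fireySum N₁ N₂ ((2⁻¹ : ℝ) • (f + f')) ^ 2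
          + t * fireySum N₁ N₂ ((2⁻¹ : ℝ) • (f - f')) ^ 2
        ≤ (fireySum N₁ N₂ f ^ 2 + fireySum N₁ N₂ f' ^ 2) / 2 := by

  intro f f'
  have hFnonneg : ∀ x : B, 0 ≤ fireySum N₁ N₂ x := by
    intro x
    apply Real.sInf_nonneg
    rintro r ⟨g, h, -, rfl⟩
    exact Real.sqrt_nonneg _
  have hmem : ∀ (x g h : B), x = g + h →
      fireySum N₁ N₂ x ≤ Real.sqrt (N₁ g ^ 2 + N₂ h ^ 2) := by
    intro x g h hx
    apply csInf_le
    · exact ⟨0, by rintro r ⟨g', h', -, rfl⟩; exact Real.sqrt_nonneg _⟩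
    · exact ⟨g, h, hx, rfl⟩
  have hsq : ∀ (x g h : B), x = g + h →
      fireySum N₁ N₂ x ^ 2 ≤ N₁ g ^ 2 + N₂ h ^ 2 := by
    intro x g h hx
    have h1 := hmem x g h hx
    have h2 : (0:ℝ) ≤ N₁ g ^ 2 + N₂ h ^ 2 := by positivity
    nlinarith [Real.sq_sqrt h2, Real.sqrt_nonneg (N₁ g ^ 2 + N₂ h ^ 2), hFnonneg x]
  have key : ∀ ε > (0:ℝ),
      fireySum N₁ N₂ ((2⁻¹ : ℝ) • (f + f')) ^ 2
          + t * fireySum N₁ N₂ ((2⁻¹ : ℝ) • (f - f')) ^ 2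
        ≤ ((fireySum N₁ N₂ f + ε) ^ 2 + (fireySum N₁ N₂ f' + ε) ^ 2) / 2 := by
    intro ε hε
    have hne : ∀ x : B, {r : ℝ | ∃ g h : B, x = g + h ∧
        r = Real.sqrt (N₁ g ^ 2 + N₂ h ^ 2)}.Nonempty := by
      intro x
      exact ⟨_, x, 0, by simp, rfl⟩
    obtain ⟨r, ⟨g, h, hfd, rfl⟩, hrlt⟩ := Real.lt_sInf_add_pos (hne f) hε
    obtain ⟨r', ⟨g', h', hfd', rfl⟩, hrlt'⟩ := Real.lt_sInf_add_pos (hne f') hε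
    have hb : N₁ g ^ 2 + N₂ h ^ 2 ≤ (fireySum N₁ N₂ f + ε) ^ 2 := by
      have h1 : Real.sqrt (N₁ g ^ 2 + N₂ h ^ 2) ≤ fireySum N₁ N₂ f + ε := hrlt.le
      have h2 : (0:ℝ) ≤ N₁ g ^ 2 + N₂ h ^ 2 := by positivity
      nlinarith [Real.sq_sqrt h2, Real.sqrt_nonneg (N₁ g ^ 2 + N₂ h ^ 2)]
    have hb' : N₁ g' ^ 2 + N₂ h' ^ 2 ≤ (fireySum N₁ N₂ f' + ε) ^ 2 := by
      have h1 : Real.sqrt (N₁ g' ^ 2 + N₂ h' ^ 2) ≤ fireySum N₁ N₂ f' + ε := hrlt'.le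
      have h2 : (0:ℝ) ≤ N₁ g' ^ 2 + N₂ h' ^ 2 := by positivity
      nlinarith [Real.sq_sqrt h2, Real.sqrt_nonneg (N₁ g' ^ 2 + N₂ h' ^ 2)]
    have hplus : fireySum N₁ N₂ ((2⁻¹ : ℝ) • (f + f')) ^ 2
        ≤ N₁ ((2⁻¹ : ℝ) • (g + g')) ^ 2 + N₂ ((2⁻¹ : ℝ) • (h + h')) ^ 2 :=
      hsq _ _ _ (by rw [hfd, hfd']; module)
    have hminus : fireySum N₁ N₂ ((2⁻¹ : ℝ) • (f - f')) ^ 2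
        ≤ N₁ ((2⁻¹ : ℝ) • (g - g')) ^ 2 + N₂ ((2⁻¹ : ℝ) • (h - h')) ^ 2 :=
      hsq _ _ _ (by rw [hfd, hfd']; module)
    have u1 := hUC₁ g g'
    have u2 := hUC₂ h h'
    nlinarith [mul_le_mul_of_nonneg_left hminus ht.le]
  refine le_of_forall_pos_le_add ?_
  intro ε' hε'
  set c : ℝ := fireySum N₁ N₂ f + fireySum N₁ N₂ f' with hc
  have hc0 : 0 ≤ c := add_nonneg (hFnonneg f) (hFnonneg f')
  have hcp : (0:ℝ) < c + 1 := by linarith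
  set ε : ℝ := min 1 (ε' / (c + 1)) with hεdef
  have hεpos : 0 < ε := lt_min one_pos (div_pos hε' hcp)
  have h1 : ε ≤ 1 := min_le_left _ _
  have h2 : ε * (c + 1) ≤ ε' := (le_div_iff₀ hcp).mp (min_le_right _ _)
  have hk := key ε hεpos
  nlinarith [hFnonneg f, hFnonneg f', hεpos.le]
end

section
/- Let q ≥ 2 and define subsets I₁ := {dyadic k ≤ d : k log(ed/k) ≤ n}. Suppose for each dyadic k = 2^j ∈ {2,4,…,2^{⌊log₂ d⌋}} we have the bound a_k ≤ (d/k)^{1/p - 1}·√(log(ed/k)) with 1/p + 1/q = 1, p ∈ (1,2]. Then ∑_{dyadic k ≤ d} a_k^q ≤ (Cq)^{q/2} for a universal constant C, and hence (∑ a_k^q)^{1/q} ≤ C'√q. -/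
-- key scalar inequality: (x+2) * 2^(-(x/q)) ≤ 2q  for x ≥ 0, q ≥ 2
lemma aux_key (q x : ℝ) (hq : 2 ≤ q) (hx : 0 ≤ x) :
    (x + 2) * (2:ℝ) ^ (-(x / q)) ≤ 2 * q := by
  have hq0 : (0:ℝ) < q := by linarith
  have h1 : x / q * Real.log 2 + 1 ≤ Real.exp (x / q * Real.log 2) :=
    Real.add_one_le_exp _
  have hqx : q * (x / q) = x := by field_simp
  have hlog : (0.6931471803:ℝ) < Real.log 2 := Real.log_two_gt_d9
  have h3 : q * (x / q * Real.log 2) = x * Real.log 2 := by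
    rw [← mul_assoc, hqx]
  have key : x + 2 ≤ 2 * q * Real.exp (x / q * Real.log 2) := by
    nlinarith [mul_le_mul_of_nonneg_left h1 (by linarith : (0:ℝ) ≤ 2 * q),
      mul_le_mul_of_nonneg_left hlog.le hx]
  have h2 : (2:ℝ) ^ (-(x / q)) = Real.exp (-(x / q * Real.log 2)) := by
    rw [Real.rpow_def_of_pos two_pos]
    ring_nf
  rw [h2]
  calc (x + 2) * Real.exp (-(x / q * Real.log 2))
      ≤ (2 * q * Real.exp (x / q * Real.log 2)) * Real.exp (-(x / q * Real.log 2)) :=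
        mul_le_mul_of_nonneg_right key (Real.exp_nonneg _)
    _ = 2 * q := by rw [mul_assoc, ← Real.exp_add]; simp

-- geometric sum bound
lemma aux_geom (L : ℕ) : ∑ i ∈ Finset.range L, ((Real.sqrt 2)⁻¹) ^ i ≤ 4 := by
  have hs2 : (4/3:ℝ) ≤ Real.sqrt 2 := by
    rw [show (4/3:ℝ) = Real.sqrt ((4/3)^2) by rw [Real.sqrt_sq (by norm_num)]]
    exact Real.sqrt_le_sqrt (by norm_num)
  have hr0 : (0:ℝ) ≤ (Real.sqrt 2)⁻¹ := by positivity
  have hr1 : (Real.sqrt 2)⁻¹ ≤ 3/4 := by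
    rw [inv_le_comm₀ (by linarith) (by norm_num)]
    linarith
  set r : ℝ := (Real.sqrt 2)⁻¹ with hr
  have hrne : r ≠ 1 := by
    intro h; rw [h] at hr1; norm_num at hr1
  rw [geom_sum_eq hrne]
  have hrL : (0:ℝ) ≤ r ^ L := pow_nonneg hr0 L
  rw [div_le_iff_of_neg (by linarith : r - 1 < 0)]
  nlinarith

-- per-term bound
lemma aux_term (d j : ℕ) (hd : 2 ≤ d) (hj1 : 1 ≤ j) (hjL : j ≤ Nat.log 2 d)
    (p q : ℝ) (hp1 : 1 < p) (hpq : 1 / p + 1 / q = 1) (hq2 : 2 ≤ q) (a : ℝ)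
    (ha0 : 0 ≤ a)
    (ha : a ≤ ((d : ℝ) / 2 ^ j) ^ (1 / p - 1) *
        Real.sqrt (Real.log (Real.exp 1 * d / 2 ^ j))) :
    a ^ q ≤ (2 * q) ^ (q / 2) * ((Real.sqrt 2)⁻¹) ^ (Nat.log 2 d - j) := by
  have hq0 : (0:ℝ) < q := by linarith
  set L := Nat.log 2 d with hL
  set i := L - j with hi
  have hiL : L = j + i := by omega
  -- basic numeric facts
  have hdL : (2:ℝ) ^ L ≤ d := by
    exact_mod_cast Nat.cast_le.mpr (Nat.pow_log_le_self 2 (by omega))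
  have hdL' : (d:ℝ) < 2 ^ (L + 1) := by
    exact_mod_cast Nat.cast_lt.mpr (Nat.lt_pow_succ_log_self (by norm_num) d)
  have h2j : (0:ℝ) < 2 ^ j := by positivity
  set D : ℝ := (d : ℝ) / 2 ^ j with hD
  have hD1 : 1 ≤ D := by
    rw [hD, le_div_iff₀ h2j]
    calc (1:ℝ) * 2 ^ j = 2 ^ j := by ring
      _ ≤ 2 ^ L := by
        apply pow_le_pow_right₀ (by norm_num) hjL
      _ ≤ d := hdL
  have hD0 : (0:ℝ) < D := by linarith
  have hDge : (2:ℝ) ^ i ≤ D := by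
    rw [hD, le_div_iff₀ h2j]
    calc (2:ℝ) ^ i * 2 ^ j = 2 ^ L := by rw [← pow_add]; congr 1; omega
      _ ≤ d := hdL
  have hDle : D ≤ 2 ^ (i + 1) := by
    rw [hD, div_le_iff₀ h2j]
    calc (d:ℝ) ≤ 2 ^ (L + 1) := hdL'.le
      _ = 2 ^ (i + 1) * 2 ^ j := by rw [← pow_add]; congr 1; omega
  set Y : ℝ := Real.log (Real.exp 1 * d / 2 ^ j) with hY
  have hYeq : Y = 1 + Real.log D := by
    rw [hY, mul_div_assoc, Real.log_mul (Real.exp_ne_zero 1) (by positivity),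
      Real.log_exp]
  have hY0 : (0:ℝ) ≤ Y := by
    rw [hYeq]
    have := Real.log_nonneg hD1
    linarith
  have hYle : Y ≤ (i : ℝ) + 2 := by
    rw [hYeq]
    have h1 : Real.log D ≤ Real.log (2 ^ (i+1)) := Real.log_le_log hD0 hDle
    rw [Real.log_pow] at h1
    have hlog2 : Real.log 2 ≤ 1 := by
      have := Real.log_two_lt_d9; linarith
    have hlog2' : 0 ≤ Real.log 2 := Real.log_nonneg (by norm_num)
    have : ((i:ℝ) + 1) * Real.log 2 ≤ (i:ℝ) + 1 := by
      nlinarith [Nat.cast_nonneg (α := ℝ) i]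
    push_cast at h1
    linarith
  -- step A: raise to power q
  have hrhs0 : 0 ≤ D ^ (1/p - 1) * Real.sqrt Y :=
    mul_nonneg (Real.rpow_nonneg hD0.le _) (Real.sqrt_nonneg _)
  have stepA : a ^ q ≤ (D ^ (1/p - 1) * Real.sqrt Y) ^ q :=
    Real.rpow_le_rpow ha0 ha hq0.le
  -- step B: rewrite RHS as D⁻¹ * Y^(q/2)
  have hexp : (1/p - 1) * q = -1 := by
    have h : 1/p - 1 = -(1/q) := by linarith
    rw [h]; field_simp
  have stepB : (D ^ (1/p - 1) * Real.sqrt Y) ^ q = D⁻¹ * Y ^ (q/2) := by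
    rw [Real.mul_rpow (Real.rpow_nonneg hD0.le _) (Real.sqrt_nonneg _),
      ← Real.rpow_mul hD0.le, hexp, Real.rpow_neg_one, Real.sqrt_eq_rpow,
      ← Real.rpow_mul hY0, show 1/2*q = q/2 by ring]
  -- step C/D: bound by (2^i)⁻¹ * (i+2)^(q/2)
  have stepD : D⁻¹ * Y ^ (q/2) ≤ ((2:ℝ)^i)⁻¹ * ((i:ℝ) + 2) ^ (q/2) := by
    apply mul_le_mul
    · exact inv_anti₀ (by positivity) hDge
    · exact Real.rpow_le_rpow hY0 hYle (by positivity)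
    · exact Real.rpow_nonneg hY0 _
    · positivity
  -- step E
  set r : ℝ := (Real.sqrt 2)⁻¹ with hr
  have hr0 : (0:ℝ) ≤ r := by positivity
  have hrr : r * r = 2⁻¹ := by
    rw [hr, ← mul_inv, Real.mul_self_sqrt (by norm_num)]
  have h2inv : ((2:ℝ)^i)⁻¹ = r^i * r^i := by
    rw [← mul_pow, hrr, inv_pow]
  have hrrpow : r = (2:ℝ) ^ (-(1/2) : ℝ) := by
    rw [Real.rpow_neg (by norm_num), hr]
    congr 1
    rw [Real.sqrt_eq_rpow]
  have hri : (r:ℝ)^i = (2:ℝ) ^ (-((i:ℝ)/2)) := by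
    rw [hrrpow, ← Real.rpow_natCast ((2:ℝ) ^ (-(1/2):ℝ)) i, ← Real.rpow_mul (by norm_num)]
    congr 1; ring
  have stepE : r^i * ((i:ℝ) + 2) ^ (q/2) ≤ (2*q) ^ (q/2) := by
    have heq : r^i * ((i:ℝ) + 2) ^ (q/2)
        = (((i:ℝ) + 2) * (2:ℝ) ^ (-((i:ℝ)/q))) ^ (q/2) := by
      rw [Real.mul_rpow (by positivity) (Real.rpow_nonneg (by norm_num) _),
        ← Real.rpow_mul (by norm_num : (0:ℝ) ≤ 2), hri]
      rw [show -((i:ℝ)/q) * (q/2) = -((i:ℝ)/2) by field_simp]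
      ring
    rw [heq]
    exact Real.rpow_le_rpow (by positivity) (aux_key q i hq2 (by positivity))
      (by positivity)
  calc a ^ q ≤ (D ^ (1/p - 1) * Real.sqrt Y) ^ q := stepA
    _ = D⁻¹ * Y ^ (q/2) := stepB
    _ ≤ ((2:ℝ)^i)⁻¹ * ((i:ℝ) + 2) ^ (q/2) := stepD
    _ = r^i * (r^i * ((i:ℝ) + 2) ^ (q/2)) := by rw [h2inv]; ring
    _ ≤ r^i * ((2*q) ^ (q/2)) := by
        apply mul_le_mul_of_nonneg_left stepE (by positivity)
    _ = (2*q) ^ (q/2) * r ^ i := by ring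


/-- dyadic summation of the dual-norm bounds. If for each dyadic
`k = 2^j ≤ d` one has `0 ≤ a_j ≤ (d/2^j)^{1/p - 1}·√(log(ed/2^j))`, with
`1/p + 1/q = 1` and `p ∈ (1,2]`, then `∑ a_j^q ≤ (Cq)^{q/2}` and hence
`(∑ a_j^q)^{1/q} ≤ C'√q`, for universal constants `C, C' > 0`. -/
theorem dyadic_dual_norm_sum :
    ∃ C : ℝ, 0 < C ∧ ∃ C' : ℝ, 0 < C' ∧
      ∀ (d : ℕ), 2 ≤ d → ∀ p q : ℝ, 1 < p → p ≤ 2 → 1 / p + 1 / q = 1 →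
        ∀ a : ℕ → ℝ,
          (∀ j ∈ Finset.Icc 1 (Nat.log 2 d),
            0 ≤ a j ∧
              a j ≤ ((d : ℝ) / 2 ^ j) ^ (1 / p - 1) *
                Real.sqrt (Real.log (Real.exp 1 * d / 2 ^ j))) →
          (∑ j ∈ Finset.Icc 1 (Nat.log 2 d), a j ^ q) ≤ (C * q) ^ (q / 2) ∧
          (∑ j ∈ Finset.Icc 1 (Nat.log 2 d), a j ^ q) ^ (1 / q)
            ≤ C' * Real.sqrt q := by
  refine ⟨8, by norm_num, 3, by norm_num, ?_⟩
  intro d hd p q hp1 hp2 hpq a ha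
  set L := Nat.log 2 d with hL
  -- q ≥ 2
  have hp0 : (0:ℝ) < p := by linarith
  have hq2 : 2 ≤ q := by
    have h1 : 1/p < 1 := by
      rw [div_lt_one hp0]; exact hp1
    have h2 : (1:ℝ)/2 ≤ 1/p := by
      apply div_le_div_of_nonneg_left (by norm_num) hp0 hp2
    have hq1 : 0 < 1/q := by linarith
    have hq0 : 0 < q := by
      by_contra h
      push_neg at h
      have : 1/q ≤ 0 := div_nonpos_of_nonneg_of_nonpos (by norm_num) h
      linarith
    have h3 : 1/q ≤ 1/2 := by linarith
    rw [div_le_div_iff₀ hq0 (by norm_num)] at h3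
    linarith
  have hq0 : (0:ℝ) < q := by linarith
  set r : ℝ := (Real.sqrt 2)⁻¹ with hr
  have hr0 : (0:ℝ) ≤ r := by positivity
  -- first bound
  have hsum1 : (∑ j ∈ Finset.Icc 1 L, a j ^ q)
      ≤ (2*q) ^ (q/2) * ∑ j ∈ Finset.Icc 1 L, r ^ (L - j) := by
    rw [Finset.mul_sum]
    apply Finset.sum_le_sum
    intro j hj
    rw [Finset.mem_Icc] at hj
    exact aux_term d j hd hj.1 hj.2 p q hp1 hpq hq2 (a j)
      (ha j (Finset.mem_Icc.mpr hj)).1 (ha j (Finset.mem_Icc.mpr hj)).2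
  have hsum2 : ∑ j ∈ Finset.Icc 1 L, r ^ (L - j) ≤ 4 := by
    have heq : ∑ j ∈ Finset.Icc 1 L, r ^ (L - j)
        = ∑ i ∈ Finset.range L, r ^ i := by
      apply Finset.sum_nbij' (fun j => L - j) (fun i => L - i)
      · intro x hx; rw [Finset.mem_Icc] at hx; rw [Finset.mem_range]; omega
      · intro x hx; rw [Finset.mem_range] at hx; rw [Finset.mem_Icc]; omega
      · intro x hx; rw [Finset.mem_Icc] at hx; omega
      · intro x hx; rw [Finset.mem_range] at hx; omega
      · intro x hx; rfl
    rw [heq]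
    exact aux_geom L
  have hS0 : (0:ℝ) ≤ ∑ j ∈ Finset.Icc 1 L, a j ^ q :=
    Finset.sum_nonneg fun j hj => Real.rpow_nonneg (ha j hj).1 _
  have h2q0 : (0:ℝ) ≤ (2*q) ^ (q/2) := Real.rpow_nonneg (by linarith) _
  have hmain : (∑ j ∈ Finset.Icc 1 L, a j ^ q) ≤ (8 * q) ^ (q/2) := by
    have h4 : (8 * q : ℝ) ^ (q/2) = 4 ^ (q/2) * (2*q) ^ (q/2) := by
      rw [← Real.mul_rpow (by norm_num) (by linarith)]
      norm_num [show (4:ℝ) * (2*q) = 8*q by ring]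
    have h5 : (4:ℝ) ≤ 4 ^ (q/2) := by
      calc (4:ℝ) = 4 ^ (1:ℝ) := by rw [Real.rpow_one]
        _ ≤ 4 ^ (q/2) := Real.rpow_le_rpow_of_exponent_le (by norm_num) (by linarith)
    calc (∑ j ∈ Finset.Icc 1 L, a j ^ q)
        ≤ (2*q) ^ (q/2) * ∑ j ∈ Finset.Icc 1 L, r ^ (L - j) := hsum1
      _ ≤ (2*q) ^ (q/2) * 4 := by
          exact mul_le_mul_of_nonneg_left hsum2 h2q0
      _ ≤ (2*q) ^ (q/2) * 4 ^ (q/2) := by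
          exact mul_le_mul_of_nonneg_left h5 h2q0
      _ = (8 * q) ^ (q/2) := by rw [h4]; ring
  constructor
  · exact hmain
  · have h6 : ((∑ j ∈ Finset.Icc 1 L, a j ^ q) : ℝ) ^ (1/q)
        ≤ ((8*q) ^ (q/2)) ^ (1/q) :=
      Real.rpow_le_rpow hS0 hmain (by positivity)
    have h7 : (((8*q) : ℝ) ^ (q/2)) ^ (1/q) = (8*q) ^ ((1:ℝ)/2) := by
      rw [← Real.rpow_mul (by linarith)]
      congr 1
      field_simp
    have h8 : ((8*q) : ℝ) ^ ((1:ℝ)/2) = Real.sqrt 8 * Real.sqrt q := by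
      rw [← Real.sqrt_eq_rpow, Real.sqrt_mul (by norm_num)]
    have h9 : Real.sqrt 8 ≤ 3 := by
      rw [show (3:ℝ) = Real.sqrt 9 by
        rw [show (9:ℝ) = 3^2 by norm_num, Real.sqrt_sq (by norm_num)]]
      exact Real.sqrt_le_sqrt (by norm_num)
    calc ((∑ j ∈ Finset.Icc 1 L, a j ^ q) : ℝ) ^ (1/q)
        ≤ Real.sqrt 8 * Real.sqrt q := by rw [← h8, ← h7]; exact h6
      _ ≤ 3 * Real.sqrt q :=
          mul_le_mul_of_nonneg_right h9 (Real.sqrt_nonneg _)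
end
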